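/- If the ideal I(Ω) contains a non-zero-divisor of R, then ω₁,…,ω_k are linearly independent over R: whenever a₁,…,a_k ∈ R satisfy Σ_{i=1}^k a_i ω_i = 0, one has a_i = 0 for all i. Consequently the submodule of M spanned by ω₁,…,ω_k is free with basis ω₁,…,ω_k. -/

import Mathlib

/-!
Put the relation `∑ⱼ aⱼ ωⱼ = 0` into the `i`-th slot of `Ω = ω₁ ∧ ⋯ ∧ ω_k`: by multilinearity
this gives `∑ⱼ aⱼ Ω[ωᵢ ↦ ωⱼ]`, where every term with `j ≠ i` has a repeated factor, so `aᵢ Ω = 0`.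
Then `aᵢ` kills every coefficient of `Ω`, in particular the non-zero-divisor in `I(Ω)`,
so `aᵢ = 0`.
-/

open ExteriorAlgebra

/-- The ideal `I(x)` generated by the coefficients of an element `x` of the exterior algebra
of a (finite free) module `M` in an induced basis; equivalently (and basis-independently),
the ideal generated by the values `φ x` over all linear functionals `φ`. -/
def coeffIdeal (R : Type*) [CommRing R] {M : Type*} [AddCommGroup M] [Module R M]
    (x : ExteriorAlgebra R M) : Ideal R :=
  Ideal.span (Set.range fun φ : Module.Dual R (ExteriorAlgebra R M) => φ x)

/-- `ω_J = ω_{j₁} ∧ ⋯ ∧ ω_{j_r}` for a strictly increasing multi-index `J`, encoded as a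
finite set `s` of indices listed in increasing order. -/
noncomputable def wedgeProd (R : Type*) [CommRing R] {M : Type*} [AddCommGroup M] [Module R M]
    {k : ℕ} (ω : Fin k → M) (s : Finset (Fin k)) : ExteriorAlgebra R M :=
  ((s.sort (· ≤ ·)).map fun j => ExteriorAlgebra.ι R (ω j)).prod

theorem AlternatingMap.smul_map_eq_zero_of_sum_smul_eq_zero {R M N ι : Type*} [CommRing R]
    [AddCommGroup M] [Module R M] [AddCommGroup N] [Module R N] [Fintype ι] [DecidableEq ι]
    (f : M [⋀^ι]→ₗ[R] N) {v : ι → M} {a : ι → R} (h : ∑ j, a j • v j = 0) (i : ι) :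
    a i • f v = 0 := by
  have hsubst :
      f (Function.update v i (∑ j, a j • v j)) = ∑ j, a j • f (Function.update v i (v j)) := by
    simp only [f.map_update_sum, f.map_update_smul]
  rw [h, f.map_update_zero, Finset.sum_eq_single i] at hsubst
  · rwa [Function.update_eq_self, eq_comm] at hsubst
  · intro j _ hji
    rw [f.map_update_self _ hji.symm, smul_zero]
  · exact absurd (Finset.mem_univ i)

theorem wedgeProd_univ {R M : Type*} [CommRing R] [AddCommGroup M] [Module R M] {k : ℕ}
    (ω : Fin k → M) : wedgeProd R ω Finset.univ = ιMulti R k ω := by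
  rw [wedgeProd, Fin.sort_univ, ιMulti_apply, List.ofFn_eq_map]

theorem mul_eq_zero_of_mem_coeffIdeal {R M : Type*} [CommRing R] [AddCommGroup M] [Module R M]
    {x : ExteriorAlgebra R M} {r : R} (hr : r • x = 0) {c : R} (hc : c ∈ coeffIdeal R x) :
    r * c = 0 := by
  have hle : coeffIdeal R x ≤ LinearMap.ker (LinearMap.mulLeft R r) := by
    refine Ideal.span_le.2 ?_
    rintro _ ⟨φ, rfl⟩
    simp [← smul_eq_mul, ← map_smul, hr]
  exact hle hc

theorem stmt_9_general {R : Type*} [CommRing R] {M : Type*} [AddCommGroup M] [Module R M]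
    {k : ℕ}
    (ω : Fin k → M)
    (hnzd : ∃ c ∈ coeffIdeal R (wedgeProd R ω Finset.univ), c ∈ nonZeroDivisors R) :
    (∀ a : Fin k → R, ∑ i, a i • ω i = 0 → ∀ i, a i = 0) ∧ LinearIndependent R ω := by
  obtain ⟨c, hc, hc_nzd⟩ := hnzd
  have hcoeff_zero : ∀ a : Fin k → R, ∑ i, a i • ω i = 0 → ∀ i, a i = 0 := by
    intro a ha i
    have hΩ : a i • wedgeProd R ω Finset.univ = 0 := by
      rw [wedgeProd_univ]
      exact (ιMulti R k).smul_map_eq_zero_of_sum_smul_eq_zero ha i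
    exact (mul_right_mem_nonZeroDivisors_eq_zero_iff hc_nzd).1
      (mul_eq_zero_of_mem_coeffIdeal hΩ hc)
  exact ⟨hcoeff_zero, Fintype.linearIndependent_iff.2 hcoeff_zero⟩

theorem stmt_9 {R : Type*} [CommRing R] {M : Type*} [AddCommGroup M] [Module R M]
    {m k : ℕ} (b : Module.Basis (Fin m) R M) (hk1 : 1 ≤ k) (hkm : k ≤ m)
    (ω : Fin k → M)
    (hnzd : ∃ c ∈ coeffIdeal R (wedgeProd R ω Finset.univ), c ∈ nonZeroDivisors R) :
    (∀ a : Fin k → R, ∑ i, a i • ω i = 0 → ∀ i, a i = 0) ∧ LinearIndependent R ω :=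
  stmt_9_general ω hnzd
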